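/- Let n ≥ 1 be an integer, let t ∈ [0,1], let τ : [0,1] → ℝ be a measurable function, and let F₁,…,Fₙ : ℝ → [0,1] be nondecreasing functions. For each i set pᵢ := ∫₀ᵗ (1 − Fᵢ(τ(s))) ds, and set q := ∫₀ᵗ (1 − (∏_{i=1}^n Fᵢ(τ(s)))^{1/n}) ds. Then 1 − ∏_{i=1}^n (1 − pᵢ) ≤ 1 − (1 − q)ⁿ, i.e., (1 − q)ⁿ ≤ ∏_{i=1}^n (1 − pᵢ). -/

import Mathlib

/-!
Write `1 - p_τ(t, F) = (1 - t) + ∫_{(0,t]} F(τ s) ds`. The constant `1 - t` is the integral of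
the constant function `1` over a point of mass `1 - t` adjoined to `(0, t]`, so Hölder's inequality
for the `n` functions `F_i ∘ τ` with exponents `1/n` on this enlarged space gives
`1 - q ≤ ∏ i, (1 - p_i) ^ (1/n)`; raising to the `n`-th power finishes the proof.
-/

open MeasureTheory
open scoped ENNReal

theorem measurableEmbedding_inl {α β : Type*} [MeasurableSpace α] [MeasurableSpace β] :
    MeasurableEmbedding (Sum.inl : α → α ⊕ β) :=
  ⟨Sum.inl_injective, measurable_inl, fun _ hs => measurableSet_inl_image.2 hs⟩

theorem measurableEmbedding_inr {α β : Type*} [MeasurableSpace α] [MeasurableSpace β] :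
    MeasurableEmbedding (Sum.inr : β → α ⊕ β) :=
  ⟨Sum.inr_injective, measurable_inr, fun _ hs => measurableSet_inr_image.2 hs⟩

theorem ENNReal.add_lintegral_prod_rpow_le {α ι : Type*} [MeasurableSpace α] {μ : Measure α}
    (s : Finset ι) (c : ℝ≥0∞) {g : ι → α → ℝ≥0∞} (hg : ∀ i ∈ s, AEMeasurable (g i) μ)
    {w : ι → ℝ} (hw : ∑ i ∈ s, w i = 1) (hw0 : ∀ i ∈ s, 0 ≤ w i) :
    c + ∫⁻ a, ∏ i ∈ s, g i a ^ w i ∂μ ≤ ∏ i ∈ s, (c + ∫⁻ a, g i a ∂μ) ^ w i := by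
  -- Hölder on `μ` plus an atom of mass `c`, where every function is extended by `1`.
  let ν : Measure (α ⊕ Unit) := μ.map Sum.inl + c • (Measure.dirac ()).map Sum.inr
  have lintegral_ν (h : α ⊕ Unit → ℝ≥0∞) :
      ∫⁻ x, h x ∂ν = c * h (Sum.inr ()) + ∫⁻ a, h (Sum.inl a) ∂μ := by
    rw [lintegral_add_measure, lintegral_smul_measure, measurableEmbedding_inl.lintegral_map,
      measurableEmbedding_inr.lintegral_map, lintegral_dirac, smul_eq_mul, add_comm]
  let f : ι → α ⊕ Unit → ℝ≥0∞ := fun i => Sum.elim (g i) 1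
  have hf : ∀ i ∈ s, AEMeasurable (f i) ν := fun i hi =>
    ((measurableEmbedding_inl.aemeasurable_map_iff (g := f i)).2 (hg i hi)).add_measure
      (((measurableEmbedding_inr.aemeasurable_map_iff (g := f i)).2 aemeasurable_const).smul_measure c)
  simpa [lintegral_ν, f] using ENNReal.lintegral_prod_norm_pow_le s hf hw hw0

theorem add_integral_prod_rpow_le {α ι : Type*} [MeasurableSpace α] {μ : Measure α}
    (s : Finset ι) {c : ℝ} (hc : 0 ≤ c) {g : ι → α → ℝ} (hg0 : ∀ i ∈ s, 0 ≤ᵐ[μ] g i)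
    (hg : ∀ i ∈ s, Integrable (g i) μ) {w : ι → ℝ} (hw : ∑ i ∈ s, w i = 1)
    (hw0 : ∀ i ∈ s, 0 ≤ w i) :
    c + ∫ a, ∏ i ∈ s, g i a ^ w i ∂μ ≤ ∏ i ∈ s, (c + ∫ a, g i a ∂μ) ^ w i := by
  have hg0' : ∀ᵐ a ∂μ, ∀ i ∈ s, 0 ≤ g i a := (Filter.eventually_all_finset s).2 hg0
  have hprod_nonneg : 0 ≤ᵐ[μ] fun a => ∏ i ∈ s, g i a ^ w i := by
    filter_upwards [hg0'] with a ha
    exact Finset.prod_nonneg fun i hi => Real.rpow_nonneg (ha i hi) _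
  have hprod_meas : AEStronglyMeasurable (fun a => ∏ i ∈ s, g i a ^ w i) μ :=
    (Finset.aemeasurable_fun_prod s fun i hi =>
      (hg i hi).aemeasurable.pow_const _).aestronglyMeasurable
  have hint_nonneg : ∀ i ∈ s, 0 ≤ c + ∫ a, g i a ∂μ := fun i hi =>
    add_nonneg hc (integral_nonneg_of_ae (hg0 i hi))
  rw [← ENNReal.ofReal_le_ofReal_iff
    (Finset.prod_nonneg fun i hi => Real.rpow_nonneg (hint_nonneg i hi) _)]
  calc ENNReal.ofReal (c + ∫ a, ∏ i ∈ s, g i a ^ w i ∂μ)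
      ≤ ENNReal.ofReal c + ∫⁻ a, ENNReal.ofReal (∏ i ∈ s, g i a ^ w i) ∂μ := by
        rw [integral_eq_lintegral_of_nonneg_ae hprod_nonneg hprod_meas]
        exact ENNReal.ofReal_add_le.trans (add_le_add_right ENNReal.ofReal_toReal_le _)
    _ = ENNReal.ofReal c + ∫⁻ a, ∏ i ∈ s, ENNReal.ofReal (g i a) ^ w i ∂μ := by
        congr 1
        refine lintegral_congr_ae ?_
        filter_upwards [hg0'] with a ha
        rw [ENNReal.ofReal_prod_of_nonneg fun i hi => Real.rpow_nonneg (ha i hi) _]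
        exact Finset.prod_congr rfl fun i hi =>
          (ENNReal.ofReal_rpow_of_nonneg (ha i hi) (hw0 i hi)).symm
    _ ≤ ∏ i ∈ s, (ENNReal.ofReal c + ∫⁻ a, ENNReal.ofReal (g i a) ∂μ) ^ w i :=
        ENNReal.add_lintegral_prod_rpow_le s _
          (fun i hi => (hg i hi).aemeasurable.ennreal_ofReal) hw hw0
    _ = ENNReal.ofReal (∏ i ∈ s, (c + ∫ a, g i a ∂μ) ^ w i) := by
        rw [ENNReal.ofReal_prod_of_nonneg fun i hi => Real.rpow_nonneg (hint_nonneg i hi) _]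
        refine Finset.prod_congr rfl fun i hi => ?_
        rw [← ENNReal.ofReal_rpow_of_nonneg (hint_nonneg i hi) (hw0 i hi),
          ENNReal.ofReal_add hc (integral_nonneg_of_ae (hg0 i hi)),
          ofReal_integral_eq_lintegral_ofReal (hg i hi) (hg0 i hi)]

theorem pow_le_prod_of_le_prod_rpow {n : ℕ} (hn : n ≠ 0) {a : ℝ} {x : Fin n → ℝ} (ha : 0 ≤ a)
    (hx : ∀ i, 0 ≤ x i) (h : a ≤ ∏ i, x i ^ (1 / (n:ℝ))) : a ^ n ≤ ∏ i, x i :=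
  calc a ^ n ≤ (∏ i, x i ^ (1 / (n:ℝ))) ^ n := pow_le_pow_left₀ ha h n
    _ = ∏ i, x i := by
      rw [← Finset.prod_pow]
      exact Finset.prod_congr rfl fun i _ => by rw [one_div, Real.rpow_inv_natCast_pow (hx i) hn]

theorem integrableOn_Ioc_of_mem_Icc {f : ℝ → ℝ} (hf : Measurable f)
    (hf01 : ∀ x, f x ∈ Set.Icc (0:ℝ) 1) (a b : ℝ) : IntegrableOn f (Set.Ioc a b) :=
  Measure.integrableOn_of_bounded (M := 1) measure_Ioc_lt_top.ne hf.aestronglyMeasurable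
    (ae_of_all _ fun x => abs_le.2 ⟨by linarith [(hf01 x).1], (hf01 x).2⟩)

theorem one_sub_intervalIntegral_one_sub {f : ℝ → ℝ} {t : ℝ} (ht : 0 ≤ t)
    (hf : IntegrableOn f (Set.Ioc 0 t)) :
    1 - ∫ s in (0:ℝ)..t, (1 - f s) = (1 - t) + ∫ s in Set.Ioc 0 t, f s := by
  rw [intervalIntegral.integral_sub intervalIntegrable_const
    ((intervalIntegrable_iff_integrableOn_Ioc_of_le ht).2 hf), intervalIntegral.integral_const,
    intervalIntegral.integral_of_le ht, smul_eq_mul, mul_one, sub_zero]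
  ring

theorem one_sub_intervalIntegral_one_sub_nonneg {f : ℝ → ℝ} {t : ℝ} (ht : t ∈ Set.Icc (0:ℝ) 1)
    (hf : Measurable f) (hf01 : ∀ x, f x ∈ Set.Icc (0:ℝ) 1) :
    0 ≤ 1 - ∫ s in (0:ℝ)..t, (1 - f s) := by
  rw [one_sub_intervalIntegral_one_sub ht.1 (integrableOn_Ioc_of_mem_Icc hf hf01 0 t)]
  exact add_nonneg (sub_nonneg.2 ht.2) (setIntegral_nonneg measurableSet_Ioc fun s _ => (hf01 s).1)

/-- **Corollary 2.4.** Symmetrizing `n` rewards while preserving the distribution of their maximum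
increases the probability of stopping before any time `t`. -/
theorem stmt2
    (n : ℕ) (hn : 1 ≤ n)
    (t : ℝ) (ht : t ∈ Set.Icc (0:ℝ) 1)
    (τ : ℝ → ℝ) (hτ : Measurable τ)
    (F : Fin n → ℝ → ℝ) (hFmono : ∀ i, Monotone (F i))
    (hF : ∀ i x, F i x ∈ Set.Icc (0:ℝ) 1)
    (p : Fin n → ℝ) (q : ℝ)
    (hp : ∀ i, p i = ∫ s in (0:ℝ)..t, (1 - F i (τ s)))
    (hq : q = ∫ s in (0:ℝ)..t, (1 - (∏ i, F i (τ s)) ^ (1 / (n:ℝ)))) :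
    (1 - q) ^ n ≤ ∏ i, (1 - p i) := by
  have hFτ : ∀ i, Measurable fun s => F i (τ s) := fun i => (hFmono i).measurable.comp hτ
  have hG : Measurable fun s => (∏ i, F i (τ s)) ^ (1 / (n:ℝ)) :=
    (Finset.measurable_prod _ fun i _ => hFτ i).pow_const _
  have hG01 : ∀ s, (∏ i, F i (τ s)) ^ (1 / (n:ℝ)) ∈ Set.Icc (0:ℝ) 1 := fun s =>
    have hprod : 0 ≤ ∏ i, F i (τ s) := Finset.prod_nonneg fun i _ => (hF i _).1
    ⟨Real.rpow_nonneg hprod _, Real.rpow_le_one hprod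
      (Finset.prod_le_one (fun i _ => (hF i _).1) fun i _ => (hF i _).2) (by positivity)⟩
  have hp' : ∀ i, 1 - p i = (1 - t) + ∫ s in Set.Ioc 0 t, F i (τ s) := fun i => by
    rw [hp i, one_sub_intervalIntegral_one_sub ht.1
      (integrableOn_Ioc_of_mem_Icc (hFτ i) (fun s => hF i (τ s)) _ _)]
  have hq' : 1 - q = (1 - t) + ∫ s in Set.Ioc 0 t, ∏ i, F i (τ s) ^ (1 / (n:ℝ)) := by
    rw [hq, one_sub_intervalIntegral_one_sub ht.1 (integrableOn_Ioc_of_mem_Icc hG hG01 _ _)]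
    simp only [Real.finsetProd_rpow _ _ fun i _ => (hF i _).1]
  have hholder : 1 - q ≤ ∏ i, (1 - p i) ^ (1 / (n:ℝ)) := by
    simpa only [hq', hp'] using add_integral_prod_rpow_le Finset.univ (sub_nonneg.2 ht.2)
      (fun i _ => ae_of_all _ fun s => (hF i (τ s)).1)
      (fun i _ => integrableOn_Ioc_of_mem_Icc (hFτ i) (fun s => hF i (τ s)) 0 t)
      (by simp [show (n:ℝ) ≠ 0 by positivity]) (fun _ _ => by positivity)
  refine pow_le_prod_of_le_prod_rpow (by omega) ?_ (fun i => ?_) hholder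
  · rw [hq]; exact one_sub_intervalIntegral_one_sub_nonneg ht hG hG01
  · rw [hp i]; exact one_sub_intervalIntegral_one_sub_nonneg ht (hFτ i) (fun s => hF i (τ s))
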